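/- If H is a graph on n vertices with at least one edge, then the independence complex of w(H) is a pseudo-manifold with boundary: there exists an independent set of size n−1 in w(H) that is contained in exactly one maximal independent set. -/

import Mathlib

/-
The edge `x_a x_b` gives the face `F = {x_a} ∪ {y_i : i ≠ a, b}` of size `n - 1`. Every vertex
outside `M = {x_a} ∪ {y_i : i ≠ a}` has a neighbour in `F` (`y_a` and `x_b` are adjacent to `x_a`,
and `x_i` to its whisker `y_i`), so every independent set containing `F` lies in the independent
set `M`, which is therefore the only maximal one containing `F`. With `x_i = Sum.inl i` and
`y_i = Sum.inr i`, these are `{a}.disjSum {a, b}ᶜ` and `{a}.disjSum {a}ᶜ`.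
-/

def whisker {n : ℕ} (H : SimpleGraph (Fin n)) : SimpleGraph (Fin n ⊕ Fin n) :=
  SimpleGraph.fromRel (fun u v =>
    (∃ i j, H.Adj i j ∧ u = Sum.inl i ∧ v = Sum.inl j) ∨ ∃ i, u = Sum.inl i ∧ v = Sum.inr i)

def IsIndep {V : Type*} (G : SimpleGraph V) (S : Set V) : Prop :=
  ∀ u ∈ S, ∀ v ∈ S, ¬ G.Adj u v

def MaxIndep {V : Type*} [DecidableEq V] (G : SimpleGraph V) (F : Finset V) : Prop :=
  IsIndep G ↑F ∧ ∀ F' : Finset V, IsIndep G ↑F' → F ⊆ F' → F = F'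

section IndependentSets

variable {V : Type*} {G : SimpleGraph V}

theorem IsIndep.mono {S T : Set V} (hT : IsIndep G T) (hST : S ⊆ T) : IsIndep G S :=
  fun u hu v hv => hT u (hST hu) v (hST hv)

theorem IsIndep.subset_of_forall_adj {F F' M : Finset V} (hF' : IsIndep G F') (hFF' : F ⊆ F')
    (hadj : ∀ v ∉ M, ∃ u ∈ F, G.Adj u v) : F' ⊆ M := by
  intro v hv
  by_contra hvM
  obtain ⟨u, hu, huv⟩ := hadj v hvM
  exact hF' u (hFF' hu) v hv huv

theorem existsUnique_maxIndep_superset_of_forall_adj [DecidableEq V] {F M : Finset V}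
    (hM : IsIndep G M) (hFM : F ⊆ M) (hadj : ∀ v ∉ M, ∃ u ∈ F, G.Adj u v) :
    ∃! M', MaxIndep G M' ∧ F ⊆ M' := by
  refine ⟨M, ⟨⟨hM, fun F' hF' hMF' => ?_⟩, hFM⟩, fun M' ⟨⟨hM', hmax⟩, hFM'⟩ => ?_⟩
  · exact hMF'.antisymm (hF'.subset_of_forall_adj (hFM.trans hMF') hadj)
  · exact hmax M hM (hM'.subset_of_forall_adj hFM' hadj)

end IndependentSets

section Whisker

variable {n : ℕ} (H : SimpleGraph (Fin n))

@[simp]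
theorem whisker_adj_inl_inl (i j : Fin n) :
    (whisker H).Adj (Sum.inl i) (Sum.inl j) ↔ H.Adj i j := by
  simp +contextual [whisker, H.adj_comm j i, H.ne_of_adj]

@[simp]
theorem whisker_adj_inl_inr (i j : Fin n) : (whisker H).Adj (Sum.inl i) (Sum.inr j) ↔ i = j := by
  simp [whisker, eq_comm]

@[simp]
theorem whisker_adj_inr_inl (i j : Fin n) : (whisker H).Adj (Sum.inr i) (Sum.inl j) ↔ i = j := by
  rw [SimpleGraph.adj_comm, whisker_adj_inl_inr, eq_comm]

@[simp]
theorem not_whisker_adj_inr_inr (i j : Fin n) : ¬ (whisker H).Adj (Sum.inr i) (Sum.inr j) := by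
  simp [whisker]

theorem isIndep_whisker_disjSum {A B : Finset (Fin n)} (hA : IsIndep H A) (hAB : Disjoint A B) :
    IsIndep (whisker H) (A.disjSum B) := by
  rintro (i | i) hi (j | j) hj <;>
    simp only [Finset.mem_coe, Finset.inl_mem_disjSum, Finset.inr_mem_disjSum] at hi hj
  · exact (whisker_adj_inl_inl H i j).not.mpr (hA i hi j hj)
  · rw [whisker_adj_inl_inr]
    rintro rfl
    exact Finset.disjoint_left.mp hAB hi hj
  · rw [whisker_adj_inr_inl]
    rintro rfl
    exact Finset.disjoint_left.mp hAB hj hi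
  · exact not_whisker_adj_inr_inr H i j

theorem exists_whisker_adj_of_notMem {a b : Fin n} (hab : H.Adj a b) :
    ∀ v ∉ ({a} : Finset (Fin n)).disjSum {a}ᶜ,
      ∃ u ∈ ({a} : Finset (Fin n)).disjSum {a, b}ᶜ, (whisker H).Adj u v := by
  have ha : Sum.inl a ∈ ({a} : Finset (Fin n)).disjSum {a, b}ᶜ := by simp
  rintro (i | i) hi <;> simp only [Finset.inl_mem_disjSum, Finset.inr_mem_disjSum,
    Finset.mem_singleton, Finset.mem_compl, not_not] at hi
  · by_cases hib : i = b
    · exact ⟨_, ha, hib ▸ (whisker_adj_inl_inl H a b).mpr hab⟩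
    · exact ⟨Sum.inr i, by simp [hi, hib], (whisker_adj_inr_inl H i i).mpr rfl⟩
  · exact ⟨_, ha, (whisker_adj_inl_inr H a i).mpr hi.symm⟩

end Whisker

/-- If `H` has at least one edge, the independence complex of `w(H)` is a
pseudo-manifold with boundary: some independent set of size `n - 1` in `w(H)`
is contained in exactly one maximal independent set. -/
theorem ind_whisker_has_boundary {n : ℕ} (H : SimpleGraph (Fin n))
    (hedge : ∃ a b : Fin n, H.Adj a b) :
    ∃ F : Finset (Fin n ⊕ Fin n), IsIndep (whisker H) ↑F ∧ F.card = n - 1 ∧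
      ∃! M : Finset (Fin n ⊕ Fin n), MaxIndep (whisker H) M ∧ F ⊆ M := by
  obtain ⟨a, b, hab⟩ := hedge
  have hFM : ({a} : Finset (Fin n)).disjSum {a, b}ᶜ ⊆ ({a} : Finset (Fin n)).disjSum {a}ᶜ :=
    Finset.disjSum_mono le_rfl (Finset.compl_subset_compl.mpr (by simp))
  have hM : IsIndep (whisker H) (({a} : Finset (Fin n)).disjSum {a}ᶜ) :=
    isIndep_whisker_disjSum H (by simp [IsIndep]) (by simp)
  have hcard : (({a} : Finset (Fin n)).disjSum {a, b}ᶜ).card = n - 1 := by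
    have hpair : ({a, b} : Finset (Fin n)).card = 2 := Finset.card_pair (H.ne_of_adj hab)
    have hn : 2 ≤ n := by simpa [hpair] using Finset.card_le_univ {a, b}
    rw [Finset.card_disjSum, Finset.card_compl, hpair, Finset.card_singleton, Fintype.card_fin]
    omega
  exact ⟨_, hM.mono (Finset.coe_subset.mpr hFM), hcard,
    existsUnique_maxIndep_superset_of_forall_adj hM hFM (exists_whisker_adj_of_notMem H hab)⟩
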